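/- Exponent of a rounded same-sign sum (Lemma SE-S4 exponent part): if x and y are nonzero precision-p binary floating-point numbers with the same sign and e_y < e_x, then s := RNE(x + y) is nonzero, has the same sign as x, and its exponent satisfies e_x ≤ e_s ≤ e_x + 1. -/

import Mathlib

/-- t is representable in precision-p binary floating-point arithmetic. -/
def FpRep (p : ℕ) (t : ℝ) : Prop :=
  ∃ (m g : ℤ), |m| < (2 : ℤ) ^ p ∧ t = (m : ℝ) * (2 : ℝ) ^ g

/-- x is a nonzero precision-p binary float with exponent e. -/
def FpVal (p : ℕ) (e : ℤ) (x : ℝ) : Prop :=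
  ∃ m : ℤ, (2 : ℤ) ^ (p - 1) ≤ |m| ∧ |m| < (2 : ℤ) ^ p ∧
    x = (m : ℝ) * (2 : ℝ) ^ (e - ((p : ℤ) - 1))

/-- R rounds to a nearest precision-p floating-point number. -/
def IsRNE (p : ℕ) (R : ℝ → ℝ) : Prop :=
  ∀ t : ℝ, FpRep p (R t) ∧ ∀ z : ℝ, FpRep p z → |t - R t| ≤ |t - z|

/-! If `x, y > 0`, then `x + y` lies between the floats `2^ex` and `2^(ex+2) - 2^(ex+2-p)` (the
largest float below `2^(ex+2)`), because `x` is at most `2^(ex+1) - 2^(ex+1-p)` and `y < 2^ex`.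
A rounding to nearest never crosses a float, so `RNE(x + y)` stays in the same interval, whose
elements have exponent `ex` or `ex + 1`. The negative case follows by the symmetry
`t ↦ -RNE(-t)`. -/

lemma two_pow_mul_two_zpow_sub (n : ℕ) (e : ℤ) : (2 : ℝ) ^ n * 2 ^ (e - n) = 2 ^ e := by
  rw [← zpow_natCast, ← zpow_add₀ two_ne_zero, add_sub_cancel]

namespace FpRep

variable {p : ℕ}

lemma neg {t : ℝ} (h : FpRep p t) : FpRep p (-t) := by
  obtain ⟨m, g, hm, rfl⟩ := h
  exact ⟨-m, g, by rwa [abs_neg], by push_cast; ring⟩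

lemma two_zpow (hp : 1 ≤ p) (e : ℤ) : FpRep p (2 ^ e) :=
  ⟨1, e, by rw [abs_one]; exact_mod_cast Nat.one_lt_two_pow (by omega), by simp⟩

lemma two_zpow_sub_two_zpow_sub (e : ℤ) : FpRep p (2 ^ e - 2 ^ (e - p)) := by
  refine ⟨2 ^ p - 1, e - p, ?_, ?_⟩
  · rw [abs_of_nonneg (sub_nonneg.mpr (one_le_pow₀ one_le_two))]
    linarith
  · push_cast
    rw [sub_mul, two_pow_mul_two_zpow_sub, one_mul]

end FpRep

namespace FpVal

variable {p : ℕ} {e : ℤ} {x : ℝ}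

lemma neg (h : FpVal p e x) : FpVal p e (-x) := by
  obtain ⟨m, hm₁, hm₂, rfl⟩ := h
  exact ⟨-m, by rwa [abs_neg], by rwa [abs_neg], by push_cast; ring⟩

lemma two_zpow_le_abs (hp : 1 ≤ p) (h : FpVal p e x) : (2 : ℝ) ^ e ≤ |x| := by
  obtain ⟨m, hm, -, rfl⟩ := h
  have hm' : (2 : ℝ) ^ (p - 1) ≤ |(m : ℝ)| := by exact_mod_cast hm
  have hscale : (2 : ℝ) ^ (p - 1) * 2 ^ (e - ((p : ℤ) - 1)) = 2 ^ e := by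
    rw [← two_pow_mul_two_zpow_sub (p - 1) e]
    push_cast [hp]
    rfl
  rw [abs_mul, abs_of_pos (by positivity : (0 : ℝ) < 2 ^ (e - ((p : ℤ) - 1))), ← hscale]
  gcongr

lemma abs_le (h : FpVal p e x) : |x| ≤ 2 ^ (e + 1) - 2 ^ (e + 1 - p) := by
  obtain ⟨m, -, hm, rfl⟩ := h
  have hm' : |(m : ℝ)| ≤ 2 ^ p - 1 := by
    rw [← Int.cast_abs]
    exact_mod_cast Int.le_sub_one_of_lt hm
  have hexp : e - ((p : ℤ) - 1) = e + 1 - p := by ring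
  rw [abs_mul, abs_of_pos (by positivity : (0 : ℝ) < 2 ^ (e - ((p : ℤ) - 1))), hexp,
    ← two_pow_mul_two_zpow_sub p (e + 1), ← sub_one_mul]
  gcongr

lemma abs_lt (h : FpVal p e x) : |x| < 2 ^ (e + 1) :=
  h.abs_le.trans_lt (sub_lt_self _ (by positivity))

end FpVal

namespace IsRNE

variable {p : ℕ} {R : ℝ → ℝ}

lemma le_round (hR : IsRNE p R) {a t : ℝ} (ha : FpRep p a) (hat : a ≤ t) : a ≤ R t := by
  have := (hR t).2 a ha
  rw [abs_of_nonneg (sub_nonneg.mpr hat)] at this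
  linarith [le_abs_self (t - R t)]

lemma round_le (hR : IsRNE p R) {b t : ℝ} (hb : FpRep p b) (htb : t ≤ b) : R t ≤ b := by
  have := (hR t).2 b hb
  rw [abs_of_nonpos (sub_nonpos.mpr htb)] at this
  linarith [neg_abs_le (t - R t)]

lemma round_mem_Icc (hR : IsRNE p R) {a b t : ℝ} (ha : FpRep p a) (hb : FpRep p b)
    (ht : t ∈ Set.Icc a b) : R t ∈ Set.Icc a b :=
  ⟨hR.le_round ha ht.1, hR.round_le hb ht.2⟩

lemma neg_comp_neg (hR : IsRNE p R) : IsRNE p (fun t ↦ -R (-t)) := by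
  intro t
  refine ⟨(hR (-t)).1.neg, fun z hz ↦ ?_⟩
  calc |t - -R (-t)| = |-t - R (-t)| := by rw [← abs_neg]; congr 1; ring
    _ ≤ |-t - -z| := (hR (-t)).2 (-z) hz.neg
    _ = |t - z| := by rw [← abs_neg]; congr 1; ring

end IsRNE

lemma round_add_mem_Icc_of_pos {p : ℕ} (hp : 1 ≤ p) {R : ℝ → ℝ} (hR : IsRNE p R)
    {x y : ℝ} {ex ey : ℤ} (hx : FpVal p ex x) (hy : FpVal p ey y) (hx₀ : 0 < x) (hy₀ : 0 < y)
    (hexp : ey < ex) :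
    R (x + y) ∈ Set.Icc ((2 : ℝ) ^ ex) (2 ^ (ex + 2) - 2 ^ (ex + 2 - p)) := by
  refine hR.round_mem_Icc (.two_zpow hp ex) (.two_zpow_sub_two_zpow_sub _) ⟨?_, ?_⟩
  · linarith [abs_of_pos hx₀ ▸ hx.two_zpow_le_abs hp]
  · have hx' := abs_of_pos hx₀ ▸ hx.abs_le
    have hy' : y < 2 ^ ex := (abs_of_pos hy₀ ▸ hy.abs_lt).trans_le
      (zpow_le_zpow_right₀ one_le_two (by omega))
    have hulp : (2 : ℝ) ^ (ex + 1 - p) ≤ 2 ^ ex := zpow_le_zpow_right₀ one_le_two (by omega)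
    have h2 : (2 : ℝ) ^ (ex + 2 - p) = 2 * 2 ^ (ex + 1 - p) := by
      rw [← zpow_one_add₀ two_ne_zero]; ring_nf
    have h1 : (2 : ℝ) ^ (ex + 1) = 2 * 2 ^ ex := by
      rw [← zpow_one_add₀ two_ne_zero]; ring_nf
    have h4 : (2 : ℝ) ^ (ex + 2) = 4 * 2 ^ ex := by
      rw [show ex + 2 = 2 + ex by ring, zpow_add₀ two_ne_zero]; norm_num
    linarith

lemma mul_round_add_pos_and_abs_mem_Ico {p : ℕ} (hp : 1 ≤ p) {R : ℝ → ℝ} (hR : IsRNE p R)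
    {x y : ℝ} {ex ey : ℤ} (hx : FpVal p ex x) (hy : FpVal p ey y) (hsign : 0 < x * y)
    (hexp : ey < ex) :
    0 < x * R (x + y) ∧ |R (x + y)| ∈ Set.Ico ((2 : ℝ) ^ ex) (2 ^ (ex + 2)) := by
  have hulp : (0 : ℝ) < 2 ^ (ex + 2 - p) := by positivity
  rcases pos_and_pos_or_neg_and_neg_of_mul_pos hsign with ⟨hx₀, hy₀⟩ | ⟨hx₀, hy₀⟩
  · obtain ⟨hlo, hhi⟩ := round_add_mem_Icc_of_pos hp hR hx hy hx₀ hy₀ hexp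
    have hs₀ : 0 < R (x + y) := lt_of_lt_of_le (by positivity) hlo
    exact ⟨mul_pos hx₀ hs₀, by rwa [abs_of_pos hs₀], by rw [abs_of_pos hs₀]; linarith⟩
  · obtain ⟨hlo, hhi⟩ := round_add_mem_Icc_of_pos hp hR.neg_comp_neg hx.neg hy.neg
      (neg_pos.mpr hx₀) (neg_pos.mpr hy₀) hexp
    rw [← neg_add, neg_neg] at hlo hhi
    have hs₀ : R (x + y) < 0 := neg_pos.mp (lt_of_lt_of_le (by positivity) hlo)
    exact ⟨mul_pos_of_neg_of_neg hx₀ hs₀, by rwa [abs_of_neg hs₀],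
      by rw [abs_of_neg hs₀]; linarith⟩

/-- Lemma SE-S4 (exponent part): same sign, e_y < e_x ⟹ s = RNE(x+y) is
nonzero, has the same sign as x, and e_x ≤ e_s ≤ e_x + 1. -/
theorem same_sign_sum_exponent (p : ℕ) (hp : 1 ≤ p)
    (R : ℝ → ℝ) (hR : IsRNE p R) (x y : ℝ) (ex ey : ℤ)
    (hx : FpVal p ex x) (hy : FpVal p ey y) (hsign : 0 < x * y)
    (hexp : ey < ex) :
    R (x + y) ≠ 0 ∧ 0 < x * R (x + y) ∧
      ∃ es : ℤ, (2 : ℝ) ^ es ≤ |R (x + y)| ∧ |R (x + y)| < (2 : ℝ) ^ (es + 1) ∧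
        ex ≤ es ∧ es ≤ ex + 1 := by
  obtain ⟨hsx, hlo, hhi⟩ := mul_round_add_pos_and_abs_mem_Ico hp hR hx hy hsign hexp
  have hs : 0 < |R (x + y)| := lt_of_lt_of_le (by positivity) hlo
  have hlog := Int.zpow_log_le_self (b := 2) one_lt_two hs
  have hlog' := Int.lt_zpow_succ_log_self (b := 2) one_lt_two |R (x + y)|
  have hle := (Int.zpow_le_iff_le_log (b := 2) one_lt_two hs).mp (by exact_mod_cast hlo)
  have hlt := (Int.lt_zpow_iff_log_lt (b := 2) one_lt_two hs).mp (by exact_mod_cast hhi)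
  push_cast at hlog hlog'
  exact ⟨abs_pos.mp hs, hsx, Int.log 2 |R (x + y)|, hlog, hlog', hle, by omega⟩
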